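/- arXiv:2505.13708 — 2 statements merged into one kernel-verified Lean document; each statement's English description precedes it below -/
import Mathlib

section
/- Let r ∈ (0,1), ε ∈ (0, 0.01], let g : ℝ^d → {−1,1} be measurable, and let q : ℝ^d → ℝ be a function satisfying |q(x) − φ_{g,10r}(x)| ≤ ε for every x ∈ ℝ^d. Define h : ℝ^d → {−1,1} by h(x) = −g(x) if q(x) > 0.8 and h(x) = g(x) otherwise. Then for every x ∈ ℝ^d with q(x) ≤ 0.1 and every x' ∈ ℝ^d with ‖x' − x‖₂ ≤ r, one has h(x') = h(x). -/
open MeasureTheory ProbabilityTheory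
open scoped RealInnerProductSpace ENNReal

noncomputable def sgn (v : ℝ) : ℝ := if 0 ≤ v then 1 else -1

noncomputable def clip (v : ℝ) : ℝ := max (-1) (min 1 v)

noncomputable def stdGaussian (d : ℕ) : Measure (EuclideanSpace ℝ (Fin d)) :=
  Measure.map (MeasurableEquiv.toLp 2 (Fin d → ℝ))
    (Measure.pi fun _ : Fin d => ProbabilityTheory.gaussianReal 0 1)

noncomputable def unifI : Measure ℝ :=
  (2⁻¹ : ℝ≥0∞) • (volume.restrict (Set.Icc (-1 : ℝ) 1))

noncomputable def lns {d : ℕ} (g : EuclideanSpace ℝ (Fin d) → ℝ) (η : ℝ)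
    (x : EuclideanSpace ℝ (Fin d)) : ℝ :=
  ((stdGaussian d) {z | g x ≠ g (x + η • z)}).toReal

noncomputable def errD {d : ℕ} (D : Measure (EuclideanSpace ℝ (Fin d) × ℝ))
    (h : EuclideanSpace ℝ (Fin d) → ℝ) : ℝ :=
  (D {p | h p.1 ≠ p.2}).toReal

noncomputable def optD {d : ℕ} (D : Measure (EuclideanSpace ℝ (Fin d) × ℝ)) : ℝ :=
  sInf {e | ∃ (u : EuclideanSpace ℝ (Fin d)) (τ : ℝ), ‖u‖ = 1 ∧
    e = errD D (fun x => sgn (⟪u, x⟫ - τ))}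

def IsLogConcave {d : ℕ} (D : Measure (EuclideanSpace ℝ (Fin d))) : Prop :=
  ∃ f : EuclideanSpace ℝ (Fin d) → ℝ,
    (∀ x, 0 ≤ f x) ∧
    D = volume.withDensity (fun x => ENNReal.ofReal (f x)) ∧
    Convex ℝ {x | 0 < f x} ∧
    ConcaveOn ℝ {x | 0 < f x} (fun x => Real.log (f x))

def IsIsotropic {d : ℕ} (D : Measure (EuclideanSpace ℝ (Fin d))) : Prop :=
  (∫ x, x ∂D) = 0 ∧
  ∀ i j : Fin d, (∫ x, x i * x j ∂D) = if i = j then 1 else 0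

def IsSubgaussian {d : ℕ} (C₀ : ℝ) (D : Measure (EuclideanSpace ℝ (Fin d))) : Prop :=
  ∀ u : EuclideanSpace ℝ (Fin d), ‖u‖ = 1 → ∀ t : ℝ, 0 ≤ t →
    D {x | t < |⟪u, x⟫|} ≤ ENNReal.ofReal (Real.exp (-(C₀ * t ^ 2)))

noncomputable def peval {d : ℕ} (p : MvPolynomial (Fin d) ℝ)
    (x : EuclideanSpace ℝ (Fin d)) : ℝ :=
  MvPolynomial.eval (fun i => x i) p

def IsPTF (d k : ℕ) (g : EuclideanSpace ℝ (Fin d) → ℝ) : Prop :=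
  ∃ p : MvPolynomial (Fin d) ℝ, p.totalDegree ≤ k ∧ ∀ x, g x = sgn (peval p x)

noncomputable def rho1 (m t : ℝ) : ℝ := Real.exp (m * t - m ^ 2 / 2)

lemma rho1_nonneg (m t : ℝ) : 0 ≤ rho1 m t := (Real.exp_pos _).le

lemma rho1_measurable (m : ℝ) : Measurable (rho1 m) := by
  unfold rho1; fun_prop

lemma gauss_shift (m : ℝ) :
    gaussianReal m 1 = (gaussianReal 0 1).withDensity (fun t => ENNReal.ofReal (rho1 m t)) := by
  rw [gaussianReal_of_var_ne_zero _ one_ne_zero, gaussianReal_of_var_ne_zero _ one_ne_zero,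
    ← withDensity_mul _ (measurable_gaussianPDF _ _)
      (show Measurable fun t => ENNReal.ofReal (rho1 m t) from
        ENNReal.measurable_ofReal.comp (rho1_measurable m))]
  congr 1
  funext t
  show gaussianPDF m 1 t = gaussianPDF 0 1 t * ENNReal.ofReal (rho1 m t)
  unfold gaussianPDF
  rw [← ENNReal.ofReal_mul (gaussianPDFReal_nonneg _ _ _)]
  congr 1
  unfold gaussianPDFReal rho1
  push_cast
  have : Real.exp (-(t - 0) ^ 2 / (2 * 1)) * Real.exp (m * t - m ^ 2 / 2)
      = Real.exp (-(t - m) ^ 2 / (2 * 1)) := by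
    rw [← Real.exp_add]; congr 1; ring
  rw [← this]; ring

lemma rho1_lintegral (m : ℝ) :
    ∫⁻ t, ENNReal.ofReal (rho1 m t) ∂(gaussianReal 0 1) = 1 := by
  have h := measure_univ (μ := gaussianReal m 1)
  rw [gauss_shift m, withDensity_apply _ MeasurableSet.univ, Measure.restrict_univ] at h
  exact h

lemma rho1_integrable (m : ℝ) : Integrable (rho1 m) (gaussianReal 0 1) := by
  refine ⟨(rho1_measurable m).aestronglyMeasurable, ?_⟩
  rw [hasFiniteIntegral_iff_ofReal (ae_of_all _ (rho1_nonneg m))]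
  rw [rho1_lintegral m]
  exact ENNReal.one_lt_top

lemma rho1_integral (m : ℝ) : ∫ t, rho1 m t ∂(gaussianReal 0 1) = 1 := by
  rw [integral_eq_lintegral_of_nonneg_ae (ae_of_all _ (rho1_nonneg m))
    (rho1_measurable m).aestronglyMeasurable, rho1_lintegral m]
  simp

lemma pi_lintegral_prod {ι : Type*} [Fintype ι] (m : Measure ℝ) [SigmaFinite m]
    (f : ι → ℝ → ℝ) (hfi : ∀ i, Integrable (f i) m) (hf0 : ∀ i t, 0 ≤ f i t) :
    ∫⁻ y, ENNReal.ofReal (∏ i, f i (y i)) ∂(Measure.pi fun _ => m)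
      = ENNReal.ofReal (∏ i, ∫ t, f i t ∂m) := by
  letI : MeasureSpace ℝ := ⟨m⟩
  haveI : SigmaFinite (volume : Measure ℝ) := ‹_›
  have hv : (Measure.pi fun _ : ι => m) = (volume : Measure (ι → ℝ)) := (volume_pi).symm
  rw [← ofReal_integral_eq_lintegral_ofReal (Integrable.fintype_prod hfi)
      (ae_of_all _ fun y => Finset.prod_nonneg fun i _ => hf0 i (y i))]
  congr 1
  rw [MeasureTheory.integral_fintype_prod_eq_prod (f := f)]

section ddim
variable {ι : Type*} [Fintype ι]

noncomputable def Pd (v : ι → ℝ) (y : ι → ℝ) : ℝ := ∏ i, rho1 (v i) (y i)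

lemma Pd_nonneg (v y : ι → ℝ) : 0 ≤ Pd v y :=
  Finset.prod_nonneg fun i _ => rho1_nonneg _ _

lemma Pd_measurable (v : ι → ℝ) : Measurable (Pd v) := by
  unfold Pd
  exact Finset.measurable_prod _ fun i _ => (rho1_measurable (v i)).comp (measurable_pi_apply i)

lemma Pd_lintegral (v : ι → ℝ) :
    ∫⁻ y, ENNReal.ofReal (Pd v y) ∂(Measure.pi fun _ : ι => gaussianReal 0 1) = 1 := by
  rw [show (fun y => ENNReal.ofReal (Pd v y))
      = fun y => ENNReal.ofReal (∏ i, rho1 (v i) (y i)) from rfl,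
    pi_lintegral_prod _ _ (fun i => rho1_integrable (v i)) (fun i t => rho1_nonneg _ _)]
  simp [rho1_integral]

lemma Pd_sq (v y : ι → ℝ) :
    (Pd v y) ^ 2 = ∏ i, Real.exp ((v i) ^ 2) * rho1 (2 * v i) (y i) := by
  unfold Pd
  rw [← Finset.prod_pow]
  refine Finset.prod_congr rfl fun i _ => ?_
  unfold rho1
  rw [← Real.exp_nat_mul, ← Real.exp_add]
  congr 1
  ring

lemma Pd_sq_lintegral (v : ι → ℝ) :
    ∫⁻ y, ENNReal.ofReal ((Pd v y) ^ 2) ∂(Measure.pi fun _ : ι => gaussianReal 0 1)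
      = ENNReal.ofReal (Real.exp (∑ i, (v i) ^ 2)) := by
  simp_rw [Pd_sq]
  rw [pi_lintegral_prod _ _
    (fun i => (rho1_integrable (2 * v i)).const_mul _)
    (fun i t => mul_nonneg (Real.exp_pos _).le (rho1_nonneg _ _))]
  congr 1
  rw [Real.exp_sum]
  refine Finset.prod_congr rfl fun i _ => ?_
  rw [integral_const_mul, rho1_integral, mul_one]

lemma pi_gauss_map (v : ι → ℝ) :
    Measure.map (· + v) (Measure.pi fun _ : ι => gaussianReal 0 1)
      = Measure.pi fun i => gaussianReal (v i) 1 := by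
  refine (Measure.pi_eq fun s hs => ?_).symm
  rw [Measure.map_apply (measurable_add_const v) (MeasurableSet.univ_pi hs)]
  have hpre : ((· + v) ⁻¹' Set.pi Set.univ s) = Set.pi Set.univ fun i => (· + v i) ⁻¹' (s i) := by
    ext y; simp [Set.mem_pi]
  rw [hpre, Measure.pi_pi]
  refine Finset.prod_congr rfl fun i _ => ?_
  have := ProbabilityTheory.gaussianReal_map_add_const (μ := 0) (v := 1) (v i)
  rw [zero_add] at this
  rw [← this, Measure.map_apply (measurable_add_const (v i)) (hs i)]

lemma pi_gauss_withDensity (v : ι → ℝ) :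
    Measure.pi (fun i => gaussianReal (v i) 1)
      = (Measure.pi fun _ : ι => gaussianReal 0 1).withDensity
          (fun y => ENNReal.ofReal (Pd v y)) := by
  refine Measure.pi_eq fun s hs => ?_
  rw [withDensity_apply _ (MeasurableSet.univ_pi hs), ← lintegral_indicator (MeasurableSet.univ_pi hs) _]
  have hind : ∀ y, (Set.pi Set.univ s).indicator (fun y => ENNReal.ofReal (Pd v y)) y
      = ENNReal.ofReal (∏ i, (s i).indicator (rho1 (v i)) (y i)) := by
    intro y
    by_cases hy : y ∈ Set.pi Set.univ s
    · rw [Set.indicator_of_mem hy]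
      unfold Pd
      congr 1
      exact Finset.prod_congr rfl fun i _ =>
        (Set.indicator_of_mem (hy i (Set.mem_univ i)) _).symm
    · rw [Set.indicator_of_notMem hy]
      obtain ⟨i, hi⟩ : ∃ i, y i ∉ s i := by simpa [Set.mem_pi] using hy
      rw [Finset.prod_eq_zero (Finset.mem_univ i) (Set.indicator_of_notMem hi _),
        ENNReal.ofReal_zero]
  simp_rw [hind]
  rw [pi_lintegral_prod _ _
    (fun i => (rho1_integrable (v i)).indicator (hs i))
    (fun i t => Set.indicator_nonneg (fun t _ => rho1_nonneg _ _) t)]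
  rw [ENNReal.ofReal_prod_of_nonneg (fun i _ => by
    rw [integral_indicator (hs i)]
    exact setIntegral_nonneg (hs i) fun t _ => rho1_nonneg _ _)]
  refine Finset.prod_congr rfl fun i _ => ?_
  rw [integral_indicator (hs i), gauss_shift (v i), withDensity_apply _ (hs i),
    ← ofReal_integral_eq_lintegral_ofReal ((rho1_integrable (v i)).restrict)
      (ae_of_all _ fun t => rho1_nonneg _ _)]

end ddim

lemma tv_core {α : Type*} [MeasurableSpace α] (μ : Measure α) [IsProbabilityMeasure μ]
    (ρ : α → ℝ) (hρm : Measurable ρ) (hρ0 : ∀ y, 0 ≤ ρ y)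
    (h1 : ∫⁻ y, ENNReal.ofReal (ρ y) ∂μ = 1)
    (K : ℝ) (hK0 : 0 ≤ K)
    (h2 : ∫⁻ y, ENNReal.ofReal ((ρ y) ^ 2) ∂μ = ENNReal.ofReal K)
    (c : ℝ) (hc : 0 ≤ c) (hK : K - 1 ≤ c ^ 2)
    (T : Set α) (hT : MeasurableSet T) :
    |(μ T).toReal - ((μ.withDensity (fun y => ENNReal.ofReal (ρ y))) T).toReal| ≤ c / 2 := by
  -- integrability facts
  have hρint : Integrable ρ μ := by
    refine ⟨hρm.aestronglyMeasurable, ?_⟩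
    rw [hasFiniteIntegral_iff_ofReal (ae_of_all _ hρ0), h1]
    exact ENNReal.one_lt_top
  have hρsqint : Integrable (fun y => (ρ y) ^ 2) μ := by
    refine ⟨(hρm.pow_const 2).aestronglyMeasurable, ?_⟩
    rw [hasFiniteIntegral_iff_ofReal (ae_of_all _ fun y => sq_nonneg _), h2]
    exact ENNReal.ofReal_lt_top
  have hρI : ∫ y, ρ y ∂μ = 1 := by
    rw [integral_eq_lintegral_of_nonneg_ae (ae_of_all _ hρ0) hρm.aestronglyMeasurable, h1]
    simp
  have hρsqI : ∫ y, (ρ y) ^ 2 ∂μ = K := by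
    rw [integral_eq_lintegral_of_nonneg_ae (ae_of_all _ fun y => sq_nonneg _)
      (hρm.pow_const 2).aestronglyMeasurable, h2, ENNReal.toReal_ofReal hK0]
  set f : α → ℝ := fun y => 1 - ρ y with hf
  have hfint : Integrable f μ := (integrable_const 1).sub hρint
  have hfI : ∫ y, f y ∂μ = 0 := by
    rw [integral_sub (integrable_const 1) hρint, hρI, integral_const]
    simp
  have hint12 : Integrable (fun y => 1 - 2 * ρ y) μ := by
    exact (integrable_const 1).sub (hρint.const_mul 2)
  have h2ρ : Integrable (fun y => 2 * ρ y) μ := by exact hρint.const_mul 2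
  have hfsqint : Integrable (fun y => (f y) ^ 2) μ := by
    have : (fun y => (f y) ^ 2) = fun y => 1 - 2 * ρ y + (ρ y) ^ 2 := by
      funext y; simp only [hf]; ring
    rw [this]
    exact hint12.add hρsqint
  have hfsqI : ∫ y, (f y) ^ 2 ∂μ = K - 1 := by
    have : (fun y => (f y) ^ 2) = fun y => 1 - 2 * ρ y + (ρ y) ^ 2 := by
      funext y; simp only [hf]; ring
    rw [this, integral_add hint12 hρsqint,
      integral_sub (integrable_const 1) h2ρ, integral_const,
      integral_const_mul, hρI, hρsqI]
    simp
    ring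
  -- E|f| ≤ c
  have habsint : Integrable (fun y => |f y|) μ := hfint.abs
  have habs : ∫ y, |f y| ∂μ ≤ c := by
    have hmem : MemLp (fun y => |f y|) 2 μ := by
      refine (memLp_two_iff_integrable_sq hfint.abs.aestronglyMeasurable).2 ?_
      simpa [sq_abs] using hfsqint
    have hvar := ProbabilityTheory.variance_nonneg (fun y => |f y|) μ
    rw [ProbabilityTheory.variance_eq_sub hmem] at hvar
    have hsq : (∫ y, |f y| ∂μ) ^ 2 ≤ K - 1 := by
      have : (μ[(fun y => |f y|) ^ 2]) = K - 1 := by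
        simpa [sq_abs] using hfsqI
      nlinarith [hvar, this]
    nlinarith [integral_nonneg (f := fun y => |f y|) (fun y => abs_nonneg (f y)) (μ := μ), hsq, hK, hc]
  -- set integral identities
  have hind : (μ T).toReal - ((μ.withDensity (fun y => ENNReal.ofReal (ρ y))) T).toReal
      = ∫ y in T, f y ∂μ := by
    have h1' : (μ T).toReal = ∫ y in T, (1 : ℝ) ∂μ := by
      rw [setIntegral_const]; simp; rfl
    have h2' : ((μ.withDensity (fun y => ENNReal.ofReal (ρ y))) T).toReal = ∫ y in T, ρ y ∂μ := by
      rw [withDensity_apply _ hT,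
        integral_eq_lintegral_of_nonneg_ae (ae_of_all _ hρ0) hρm.aestronglyMeasurable]
    rw [h1', h2', ← integral_sub (integrable_const 1) hρint.restrict]
  rw [hind]
  have hsplit : (∫ y in T, f y ∂μ) + (∫ y in Tᶜ, f y ∂μ) = 0 := by
    rw [integral_add_compl hT hfint, hfI]
  have hb1 : |∫ y in T, f y ∂μ| ≤ ∫ y in T, |f y| ∂μ := by
    simpa [Real.norm_eq_abs] using norm_integral_le_integral_norm (μ := μ.restrict T) f
  have hb2 : |∫ y in Tᶜ, f y ∂μ| ≤ ∫ y in Tᶜ, |f y| ∂μ := by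
    simpa [Real.norm_eq_abs] using norm_integral_le_integral_norm (μ := μ.restrict Tᶜ) f
  have hsum : (∫ y in T, |f y| ∂μ) + (∫ y in Tᶜ, |f y| ∂μ) = ∫ y, |f y| ∂μ :=
    integral_add_compl hT habsint
  have : |∫ y in T, f y ∂μ| = |∫ y in Tᶜ, f y ∂μ| := by
    rw [show (∫ y in Tᶜ, f y ∂μ) = -(∫ y in T, f y ∂μ) by linarith, abs_neg]
  linarith [hb1, hb2, habs, this, hsum]

instance stdGaussian_prob (d : ℕ) : IsProbabilityMeasure (stdGaussian d) :=
  Measure.isProbabilityMeasure_map (MeasurableEquiv.measurable _).aemeasurable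

lemma stdGaussian_shift {d : ℕ} (w : EuclideanSpace ℝ (Fin d)) (hw : ‖w‖ ≤ 1/10)
    (S : Set (EuclideanSpace ℝ (Fin d))) (hS : MeasurableSet S) :
    |(stdGaussian d S).toReal - (stdGaussian d ((fun z => z + w) ⁻¹' S)).toReal| ≤ 0.06 := by
  classical
  set e := (MeasurableEquiv.toLp 2 (Fin d → ℝ)).symm with he
  set μ0 : Measure (Fin d → ℝ) := Measure.pi fun _ : Fin d => gaussianReal 0 1 with hμ0
  set v : Fin d → ℝ := e w with hv
  set T : Set (Fin d → ℝ) := e.symm ⁻¹' S with hTdef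
  have hT : MeasurableSet T := e.symm.measurable hS
  have hA : stdGaussian d S = μ0 T := MeasurableEquiv.map_apply _ _
  have hpre : e.symm ⁻¹' ((fun z => z + w) ⁻¹' S) = (fun y => y + v) ⁻¹' T := rfl
  have hB : stdGaussian d ((fun z => z + w) ⁻¹' S)
      = (μ0.withDensity (fun y => ENNReal.ofReal (Pd v y))) T := by
    calc stdGaussian d ((fun z => z + w) ⁻¹' S)
        = μ0 (e.symm ⁻¹' ((fun z => z + w) ⁻¹' S)) := MeasurableEquiv.map_apply _ _
      _ = μ0 ((fun y => y + v) ⁻¹' T) := by rw [hpre]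
      _ = (Measure.map (· + v) μ0) T := (Measure.map_apply (measurable_add_const v) hT).symm
      _ = (Measure.pi fun i => gaussianReal (v i) 1) T := by rw [hμ0, pi_gauss_map]
      _ = _ := by rw [hμ0, pi_gauss_withDensity]
  rw [hA, hB]
  have hnorm : ∑ i, (v i) ^ 2 ≤ 0.01 := by
    have h1 : ‖w‖ ^ 2 = ∑ i, (w i) ^ 2 := by
      rw [EuclideanSpace.norm_eq w, Real.sq_sqrt (Finset.sum_nonneg fun i _ => sq_nonneg _)]
      simp [Real.norm_eq_abs, sq_abs]
    have h2 : ∑ i, (v i) ^ 2 = ‖w‖ ^ 2 := by rw [h1]; rfl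
    rw [h2]
    nlinarith [norm_nonneg w]
  have hexp : Real.exp (∑ i, (v i) ^ 2) - 1 ≤ (0.12 : ℝ) ^ 2 := by
    have h1 : Real.exp (∑ i, (v i) ^ 2) ≤ Real.exp 0.01 := Real.exp_le_exp.2 hnorm
    have h2 : (0.99 : ℝ) ≤ Real.exp (-0.01) := by
      have := Real.add_one_le_exp (-0.01 : ℝ)
      linarith
    have h3 : Real.exp (0.01 : ℝ) * Real.exp (-0.01 : ℝ) = 1 := by
      rw [← Real.exp_add]; norm_num
    nlinarith [Real.exp_pos (0.01 : ℝ), Real.exp_pos (-0.01 : ℝ)]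
  have := tv_core μ0 (Pd v) (Pd_measurable v) (Pd_nonneg v)
    (Pd_lintegral v) (Real.exp (∑ i, (v i) ^ 2)) (Real.exp_pos _).le
    (Pd_sq_lintegral v) 0.12 (by norm_num) hexp T hT
  calc |(μ0 T).toReal - ((μ0.withDensity fun y => ENNReal.ofReal (Pd v y)) T).toReal|
      ≤ 0.12 / 2 := this
    _ = 0.06 := by norm_num

lemma measurable_shiftSet {d : ℕ} (g : EuclideanSpace ℝ (Fin d) → ℝ) (hg : Measurable g)
    (c : EuclideanSpace ℝ (Fin d)) (η : ℝ) (t : ℝ) :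
    MeasurableSet {z : EuclideanSpace ℝ (Fin d) | t ≠ g (c + η • z)} := by
  have hmf : Measurable fun z : EuclideanSpace ℝ (Fin d) => g (c + η • z) :=
    hg.comp ((continuous_const.add (continuous_id.const_smul η)).measurable)
  have : {z : EuclideanSpace ℝ (Fin d) | t ≠ g (c + η • z)}
      = (fun z : EuclideanSpace ℝ (Fin d) => g (c + η • z)) ⁻¹' ({t}ᶜ) := by
    ext z; simp [ne_comm]
  rw [this]
  exact hmf (measurableSet_singleton t).compl

theorem stmt7 {d : ℕ} (r ε : ℝ) (hr : r ∈ Set.Ioo (0:ℝ) 1) (hε : ε ∈ Set.Ioc (0:ℝ) 0.01)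
    (g : EuclideanSpace ℝ (Fin d) → ℝ) (hg : Measurable g)
    (hgval : ∀ x, g x = 1 ∨ g x = -1)
    (q : EuclideanSpace ℝ (Fin d) → ℝ)
    (hq : ∀ x, |q x - lns g (10*r) x| ≤ ε)
    (h : EuclideanSpace ℝ (Fin d) → ℝ)
    (hh : ∀ x, h x = if 0.8 < q x then -g x else g x)
    (x : EuclideanSpace ℝ (Fin d)) (hx : q x ≤ 0.1)
    (x' : EuclideanSpace ℝ (Fin d)) (hx' : ‖x' - x‖ ≤ r) :
    h x' = h x := by
  have hr0 : (0:ℝ) < r := hr.1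
  have hη0 : (0:ℝ) < 10 * r := by linarith
  set η : ℝ := 10 * r with hηdef
  set w : EuclideanSpace ℝ (Fin d) := η⁻¹ • (x' - x) with hwdef
  have hwnorm : ‖w‖ ≤ 1/10 := by
    rw [hwdef, norm_smul, norm_inv, Real.norm_eq_abs, abs_of_pos hη0]
    have h1 : η⁻¹ * ‖x' - x‖ ≤ η⁻¹ * r :=
      mul_le_mul_of_nonneg_left hx' (inv_nonneg.2 hη0.le)
    have h2 : η⁻¹ * r = 1/10 := by rw [hηdef]; field_simp
    linarith
  set A : Set (EuclideanSpace ℝ (Fin d)) := {z | g x ≠ g (x + η • z)} with hAdef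
  have hAmeas : MeasurableSet A := measurable_shiftSet g hg x η (g x)
  have hkey : ∀ z : EuclideanSpace ℝ (Fin d), x + η • (z + w) = x' + η • z := by
    intro z
    have : η • w = x' - x := by
      rw [hwdef, smul_smul, mul_inv_cancel₀ hη0.ne', one_smul]
    rw [smul_add, this]
    abel
  have hApre : (fun z => z + w) ⁻¹' A = {z | g x ≠ g (x' + η • z)} := by
    ext z
    simp only [Set.mem_preimage, hAdef, Set.mem_setOf_eq, hkey z]
  have hshift := stdGaussian_shift w hwnorm A hAmeas
  rw [hApre] at hshift
  set S' : Set (EuclideanSpace ℝ (Fin d)) := {z | g x ≠ g (x' + η • z)} with hS'def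
  have hS'meas : MeasurableSet S' := measurable_shiftSet g hg x' η (g x)
  have hφx : lns g (10*r) x = (stdGaussian d A).toReal := rfl
  have hqx := hq x
  have hε1 : ε ≤ 0.01 := hε.2
  have hφxle : (stdGaussian d A).toReal ≤ 0.11 := by
    rw [hφx] at hqx
    cases abs_le.1 hqx with
    | intro h1 h2 => linarith
  have hb : (stdGaussian d S').toReal ≤ 0.17 := by
    cases abs_le.1 hshift with
    | intro h1 h2 => linarith
  have hhx : h x = g x := by
    rw [hh x, if_neg]; norm_num; linarith
  by_cases hgx : g x' = g x
  · -- same sign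
    have hlns : lns g (10*r) x' = (stdGaussian d S').toReal := by
      unfold lns
      rw [hS'def, hgx]
    have hqx' := hq x'
    rw [hlns] at hqx'
    have : q x' ≤ 0.18 := by
      cases abs_le.1 hqx' with
      | intro h1 h2 => linarith
    rw [hh x', if_neg (by norm_num; linarith), hgx, hhx]
  · -- opposite sign
    have hgx' : g x' = -g x := by
      rcases hgval x' with h1 | h1 <;> rcases hgval x with h2 | h2 <;>
        simp [h1, h2] at hgx ⊢ <;> norm_num
    have hcompl : {z | g x' ≠ g (x' + η • z)} = S'ᶜ := by
      ext z
      simp only [Set.mem_setOf_eq, Set.mem_compl_iff, hS'def, hgx']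
      rcases hgval (x' + η • z) with h1 | h1 <;> rcases hgval x with h2 | h2 <;>
        rw [h1, h2] <;> norm_num
    have hlns : lns g (10*r) x' = (stdGaussian d S'ᶜ).toReal := by
      unfold lns
      rw [← hcompl]
    have hcval : (stdGaussian d S'ᶜ).toReal = 1 - (stdGaussian d S').toReal := by
      rw [prob_compl_eq_one_sub hS'meas,
        ENNReal.toReal_sub_of_le prob_le_one ENNReal.one_ne_top, ENNReal.toReal_one]
    have hqx' := hq x'
    rw [hlns, hcval] at hqx'
    have : 0.8 < q x' := by
      cases abs_le.1 hqx' with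
      | intro h1 h2 => linarith
    rw [hh x', if_pos this, hgx', hhx]
    ring
end

section
/- Let d, k ≥ 1, η > 0, ε > 0, let D be a probability measure on ℝ^d, and let S be a finite nonempty multiset of points in ℝ^d such that for every pair f₁, f₂ of degree-k polynomial threshold functions on ℝ^d: | Pr_{x∼S}[f₁(x) ≠ f₂(x)] − Pr_{x∼D}[f₁(x) ≠ f₂(x)] | ≤ ε, where x∼S means uniform over the multiset S. Then for every pair f₁, f₂ of degree-k polynomial threshold functions on ℝ^d: | Pr_{x∼S, z∼N(0,I_d)}[f₁(x+ηz) ≠ f₂(x+ηz)] − Pr_{x∼D, z∼N(0,I_d)}[f₁(x+ηz) ≠ f₂(x+ηz)] | ≤ ε. -/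
open MeasureTheory
open scoped RealInnerProductSpace ENNReal

lemma my_td_bind₁_le {σ : Type*} (f : σ → MvPolynomial σ ℝ)
    (hf : ∀ i, (f i).totalDegree ≤ 1) (p : MvPolynomial σ ℝ) :
    (MvPolynomial.bind₁ f p).totalDegree ≤ p.totalDegree := by
  rw [MvPolynomial.bind₁, MvPolynomial.aeval_def, MvPolynomial.eval₂_eq]
  refine MvPolynomial.totalDegree_finsetSum_le (fun s hs => ?_)
  calc (MvPolynomial.C (MvPolynomial.coeff s p) *
        ∏ i ∈ s.support, f i ^ s i).totalDegree
      ≤ (MvPolynomial.C (MvPolynomial.coeff s p)).totalDegree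
        + (∏ i ∈ s.support, f i ^ s i).totalDegree := MvPolynomial.totalDegree_mul _ _
    _ ≤ 0 + ∑ i ∈ s.support, (f i ^ s i).totalDegree := by
        rw [MvPolynomial.totalDegree_C]
        exact add_le_add le_rfl (MvPolynomial.totalDegree_finset_prod _ _)
    _ ≤ ∑ i ∈ s.support, s i * 1 := by
        rw [zero_add]
        refine Finset.sum_le_sum (fun i _ => ?_)
        exact (MvPolynomial.totalDegree_pow _ _).trans
          (Nat.mul_le_mul_left _ (hf i))
    _ = ∑ i ∈ s.support, s i := by simp
    _ ≤ p.totalDegree := MvPolynomial.le_totalDegree hs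

lemma my_multiset_integral {α : Type*} {E : Type*} [MeasurableSpace E] (μ : Measure E)
    (S : Multiset α) (F : α → E → ℝ) (hi : ∀ a, Integrable (F a) μ) :
    Integrable (fun z => (S.map (fun a => F a z)).sum) μ ∧
    ∫ z, (S.map fun a => F a z).sum ∂μ = (S.map (fun a => ∫ z, F a z ∂μ)).sum := by
  induction S using Multiset.induction_on with
  | empty => simp [integrable_const]
  | cons a s ih =>
    constructor
    · simpa only [Multiset.map_cons, Multiset.sum_cons, Pi.add_def] using (hi a).add ih.1
    · simp only [Multiset.map_cons, Multiset.sum_cons]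
      rw [integral_add (hi a) ih.1, ih.2]

lemma my_aeval_eq_eval {d : ℕ} (g : Fin d → ℝ) (q : MvPolynomial (Fin d) ℝ) :
    MvPolynomial.aeval g q = MvPolynomial.eval g q := by
  rw [MvPolynomial.aeval_def, Algebra.algebraMap_self]
  rfl

theorem stmt16 {d k : ℕ} (hd : 1 ≤ d) (hk : 1 ≤ k) (η ε : ℝ) (hη : 0 < η) (hε : 0 < ε)
    (D : Measure (EuclideanSpace ℝ (Fin d))) [IsProbabilityMeasure D]
    (S : Multiset (EuclideanSpace ℝ (Fin d))) (hS : S ≠ 0)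
    (hrep : ∀ f₁ f₂ : EuclideanSpace ℝ (Fin d) → ℝ, IsPTF d k f₁ → IsPTF d k f₂ →
      |(S.map (fun x => if f₁ x ≠ f₂ x then (1:ℝ) else 0)).sum / (Multiset.card S : ℝ)
        - (D {x | f₁ x ≠ f₂ x}).toReal| ≤ ε) :
    ∀ f₁ f₂ : EuclideanSpace ℝ (Fin d) → ℝ, IsPTF d k f₁ → IsPTF d k f₂ →
      |(S.map (fun x =>
          ((stdGaussian d) {z | f₁ (x + η • z) ≠ f₂ (x + η • z)}).toReal)).sum
            / (Multiset.card S : ℝ)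
        - ∫ x, ((stdGaussian d) {z | f₁ (x + η • z) ≠ f₂ (x + η • z)}).toReal ∂D|
      ≤ ε := by
  classical
  intro f₁ f₂ hf₁ hf₂
  haveI hγp : IsProbabilityMeasure (stdGaussian d) := by
    rw [stdGaussian]
    exact Measure.isProbabilityMeasure_map (MeasurableEquiv.measurable _).aemeasurable
  obtain ⟨p₁, hp₁d, hp₁⟩ := hf₁
  obtain ⟨p₂, hp₂d, hp₂⟩ := hf₂
  set γ := stdGaussian d with hγdef
  -- continuity of polynomial evaluation
  have hcoord : ∀ i : Fin d, Continuous fun x : EuclideanSpace ℝ (Fin d) => x i :=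
    fun i => (continuous_apply i).comp (PiLp.continuous_ofLp ..)
  have hpc : ∀ p : MvPolynomial (Fin d) ℝ, Continuous fun x : EuclideanSpace ℝ (Fin d) => peval p x := by
    intro p
    induction p using MvPolynomial.induction_on with
    | C a => simpa [peval] using continuous_const
    | add p q hp hq => simpa [peval, map_add, Pi.add_def] using hp.add hq
    | mul_X p n hp => simpa [peval, map_mul, Pi.mul_def] using hp.mul (hcoord n)
  have hsgn : Measurable sgn := by
    unfold sgn
    exact Measurable.ite (measurableSet_le measurable_const measurable_id)
      measurable_const measurable_const
  have hmove : Continuous fun q : EuclideanSpace ℝ (Fin d) × EuclideanSpace ℝ (Fin d) => q.1 + η • q.2 :=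
    continuous_fst.add (continuous_snd.const_smul η)
  set s : Set (EuclideanSpace ℝ (Fin d) × EuclideanSpace ℝ (Fin d)) := {q | f₁ (q.1 + η • q.2) ≠ f₂ (q.1 + η • q.2)} with hsdef
  have h1 : Measurable fun q : EuclideanSpace ℝ (Fin d) × EuclideanSpace ℝ (Fin d) => f₁ (q.1 + η • q.2) := by
    have he : (fun q : EuclideanSpace ℝ (Fin d) × EuclideanSpace ℝ (Fin d) => f₁ (q.1 + η • q.2))
        = fun q => sgn (peval p₁ (q.1 + η • q.2)) := funext fun q => hp₁ _
    rw [he]; exact hsgn.comp ((hpc p₁).comp hmove).measurable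
  have h2 : Measurable fun q : EuclideanSpace ℝ (Fin d) × EuclideanSpace ℝ (Fin d) => f₂ (q.1 + η • q.2) := by
    have he : (fun q : EuclideanSpace ℝ (Fin d) × EuclideanSpace ℝ (Fin d) => f₂ (q.1 + η • q.2))
        = fun q => sgn (peval p₂ (q.1 + η • q.2)) := funext fun q => hp₂ _
    rw [he]; exact hsgn.comp ((hpc p₂).comp hmove).measurable
  have hs : MeasurableSet s := by
    have he : s = {q : EuclideanSpace ℝ (Fin d) × EuclideanSpace ℝ (Fin d) | f₁ (q.1 + η • q.2) = f₂ (q.1 + η • q.2)}ᶜ := rfl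
    rw [he]; exact (measurableSet_eq_fun h1 h2).compl
  -- shifted PTFs are PTFs
  have hshift : ∀ (z : EuclideanSpace ℝ (Fin d)) (p : MvPolynomial (Fin d) ℝ) (f : EuclideanSpace ℝ (Fin d) → ℝ), p.totalDegree ≤ k →
      (∀ x, f x = sgn (peval p x)) → IsPTF d k (fun x => f (x + η • z)) := by
    intro z p f hpd hpf
    refine ⟨MvPolynomial.bind₁ (fun i => MvPolynomial.X i + MvPolynomial.C (η * z i)) p,
      le_trans (my_td_bind₁_le _ (fun i => ?_) p) hpd, fun x => ?_⟩
    · refine le_trans (MvPolynomial.totalDegree_add _ _) ?_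
      rw [MvPolynomial.totalDegree_X, MvPolynomial.totalDegree_C]
      simp
    · show f (x + η • z) = _
      rw [hpf]
      congr 1
      unfold peval
      rw [← my_aeval_eq_eval, ← my_aeval_eq_eval, MvPolynomial.aeval_bind₁]
      have he2 : (fun i => (x + η • z) i)
          = fun i => (MvPolynomial.aeval fun j : Fin d => x j)
              (MvPolynomial.X i + MvPolynomial.C (η * z i)) := by
        funext i
        simp [PiLp.add_apply, PiLp.smul_apply, smul_eq_mul, Algebra.algebraMap_self,
          RingHom.id_apply]
      rw [he2]
  -- the per-z bound from hrep
  have key : ∀ z : EuclideanSpace ℝ (Fin d),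
      |(S.map (fun x => if f₁ (x + η • z) ≠ f₂ (x + η • z) then (1:ℝ) else 0)).sum
          / (Multiset.card S : ℝ)
        - (D {x | f₁ (x + η • z) ≠ f₂ (x + η • z)}).toReal| ≤ ε :=
    fun z => hrep _ _ (hshift z p₁ f₁ hp₁d hp₁) (hshift z p₂ f₂ hp₂d hp₂)
  set n : ℝ := (Multiset.card S : ℝ) with hndef
  set F : EuclideanSpace ℝ (Fin d) → EuclideanSpace ℝ (Fin d) → ℝ :=
    fun a z => if f₁ (a + η • z) ≠ f₂ (a + η • z) then (1:ℝ) else 0 with hFdef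
  set A : EuclideanSpace ℝ (Fin d) → ℝ := fun z => (S.map (fun a => F a z)).sum with hAdef
  set B : EuclideanSpace ℝ (Fin d) → ℝ := fun z => (D ((fun x => (x, z)) ⁻¹' s)).toReal with hBdef
  have hsec : ∀ a : EuclideanSpace ℝ (Fin d), MeasurableSet {z : EuclideanSpace ℝ (Fin d) | f₁ (a + η • z) ≠ f₂ (a + η • z)} :=
    fun a => hs.preimage measurable_prodMk_left
  have hFind : ∀ a : EuclideanSpace ℝ (Fin d),
      F a = Set.indicator {z : EuclideanSpace ℝ (Fin d) | f₁ (a + η • z) ≠ f₂ (a + η • z)} (fun _ => (1:ℝ)) := by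
    intro a; funext z; simp [hFdef, Set.indicator_apply, Set.mem_setOf_eq]
  have hiF : ∀ a : EuclideanSpace ℝ (Fin d), Integrable (F a) γ := by
    intro a
    rw [hFind a]
    exact (integrable_const 1).indicator (hsec a)
  have hAB := my_multiset_integral γ S F hiF
  have hAint : ∫ z, A z ∂γ
      = (S.map (fun x => (γ {z | f₁ (x + η • z) ≠ f₂ (x + η • z)}).toReal)).sum := by
    rw [hAB.2]
    refine congrArg _ (Multiset.map_congr rfl fun a _ => ?_)
    rw [hFind a]
    exact integral_indicator_one (hsec a)
  have hBmeas : Measurable fun z : EuclideanSpace ℝ (Fin d) => D ((fun x => (x, z)) ⁻¹' s) :=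
    measurable_measure_prodMk_right hs
  have hiB : Integrable B γ := by
    refine Integrable.mono' (integrable_const (1:ℝ))
      hBmeas.ennreal_toReal.aestronglyMeasurable ?_
    filter_upwards with z
    rw [Real.norm_eq_abs, abs_of_nonneg ENNReal.toReal_nonneg]
    simpa using ENNReal.toReal_mono ENNReal.one_ne_top prob_le_one
  have hD : ∫ x, (γ {z | f₁ (x + η • z) ≠ f₂ (x + η • z)}).toReal ∂D = ∫ z, B z ∂γ := by
    have hm1 : Measurable fun x : EuclideanSpace ℝ (Fin d) => γ (Prod.mk x ⁻¹' s) :=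
      measurable_measure_prodMk_left hs
    show ∫ x, (γ (Prod.mk x ⁻¹' s)).toReal ∂D = ∫ z, (D ((fun x => (x, z)) ⁻¹' s)).toReal ∂γ
    rw [integral_toReal hm1.aemeasurable (ae_of_all _ fun x => measure_lt_top γ _),
      integral_toReal hBmeas.aemeasurable (ae_of_all _ fun z => measure_lt_top D _)]
    congr 1
    rw [← Measure.prod_apply hs, Measure.prod_apply_symm hs]
  have hfinal : (S.map (fun x =>
        (γ {z | f₁ (x + η • z) ≠ f₂ (x + η • z)}).toReal)).sum / n
      - ∫ x, (γ {z | f₁ (x + η • z) ≠ f₂ (x + η • z)}).toReal ∂D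
      = ∫ z, (A z / n - B z) ∂γ := by
    rw [integral_sub (hAB.1.div_const _) hiB, integral_div, hAint, hD]
  rw [show |(S.map (fun x =>
        (γ {z | f₁ (x + η • z) ≠ f₂ (x + η • z)}).toReal)).sum / n
      - ∫ x, (γ {z | f₁ (x + η • z) ≠ f₂ (x + η • z)}).toReal ∂D|
      = |∫ z, (A z / n - B z) ∂γ| from congrArg _ hfinal]
  have hb : ∀ᵐ z ∂γ, ‖A z / n - B z‖ ≤ ε := by
    filter_upwards with z
    rw [Real.norm_eq_abs]
    exact key z
  have := norm_integral_le_of_norm_le_const hb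
  simpa [measure_univ] using this
end
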